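/- Let k ≥ 2 and v : ℂ^k → ℂ^{2k+2}, v(t) = (1, t_1, …, t_k, t_1², …, t_k², t_1³ + … + t_k³). For generic t, the vectors v, ∂v/∂t_1, …, ∂v/∂t_k, ∂²v/∂t_1², …, ∂²v/∂t_k² are linearly independent; in particular the span of v together with all first and second partial derivatives of v at a generic point has dimension 2k+1. -/
import Mathlib


/-- The vector `v(t) = (1, t_1, …, t_k, t_1², …, t_k², t_1³ + … + t_k³) ∈ ℂ^{2k+2}`. -/
noncomputable def oscV (k : ℕ) (t : Fin k → ℂ) : Fin (2 * k + 2) → ℂ := fun p =>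
  if h0 : (p : ℕ) = 0 then 1
  else if h1 : (p : ℕ) ≤ k then t ⟨(p : ℕ) - 1, by omega⟩
  else if h2 : (p : ℕ) ≤ 2 * k then (t ⟨(p : ℕ) - k - 1, by omega⟩) ^ 2
  else ∑ i, (t i) ^ 3

/-- The first partial derivative `∂v/∂t_i`. -/
noncomputable def oscD1 (k : ℕ) (t : Fin k → ℂ) (i : Fin k) : Fin (2 * k + 2) → ℂ := fun p =>
  if (p : ℕ) = (i : ℕ) + 1 then 1
  else if (p : ℕ) = k + (i : ℕ) + 1 then 2 * t i
  else if (p : ℕ) = 2 * k + 1 then 3 * (t i) ^ 2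
  else 0

/-- The second partial derivative `∂²v/∂t_i²` (the mixed ones vanish). -/
noncomputable def oscD2 (k : ℕ) (t : Fin k → ℂ) (i : Fin k) : Fin (2 * k + 2) → ℂ := fun p =>
  if (p : ℕ) = k + (i : ℕ) + 1 then 2
  else if (p : ℕ) = 2 * k + 1 then 6 * t i
  else 0

/-- The family `v, ∂v/∂t_1, …, ∂v/∂t_k, ∂²v/∂t_1², …, ∂²v/∂t_k²`. -/
noncomputable def oscFam (k : ℕ) (t : Fin k → ℂ) : Fin (2 * k + 1) → (Fin (2 * k + 2) → ℂ) :=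
  fun m =>
    if h0 : (m : ℕ) = 0 then oscV k t
    else if h1 : (m : ℕ) ≤ k then oscD1 k t ⟨(m : ℕ) - 1, by omega⟩
    else oscD2 k t ⟨(m : ℕ) - k - 1, by have := m.isLt; omega⟩

/-- For generic `t` (e.g. the `t_i` pairwise distinct and nonzero), the
vectors `v, ∂v/∂t_1, …, ∂v/∂t_k, ∂²v/∂t_1², …, ∂²v/∂t_k²` are linearly independent; in
particular their span has dimension `2k + 1`. -/
theorem stmt_12 (k : ℕ) (hk : 2 ≤ k) (t : Fin k → ℂ)
    (ht1 : Function.Injective t) (ht2 : ∀ i, t i ≠ 0) :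
    LinearIndependent ℂ (oscFam k t) ∧
      Module.finrank ℂ ↥(Submodule.span ℂ (Set.range (oscFam k t))) = 2 * k + 1 := by
  have hli : LinearIndependent ℂ (oscFam k t) := by
    rw [Fintype.linearIndependent_iff]
    intro c hc m
    suffices h : ∀ N, ∀ m : Fin (2 * k + 1), (m : ℕ) = N → c m = 0 by exact h m m rfl
    intro N
    induction N using Nat.strong_induction_on with
    | _ N ih =>
      intro m hm
      have hp : (m : ℕ) < 2 * k + 2 := by omega
      have heq := congrFun hc ⟨(m : ℕ), hp⟩
      simp only [Finset.sum_apply, Pi.smul_apply, smul_eq_mul, Pi.zero_apply] at heq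
      rw [Finset.sum_eq_single m] at heq
      · have hval : oscFam k t m ⟨(m : ℕ), hp⟩ = 1 ∨ oscFam k t m ⟨(m : ℕ), hp⟩ = 2 := by
          have hmlt := m.isLt
          simp only [oscFam, oscV, oscD1, oscD2, Fin.val_mk]
          split_ifs <;> simp only [oscV, oscD1, oscD2, Fin.val_mk] <;> split_ifs <;> first | omega | norm_num
        rcases hval with h | h <;> rw [h] at heq
        · simpa using heq
        · have : c m = 0 := by
            have h2 : (2 : ℂ) ≠ 0 := by norm_num
            exact (mul_eq_zero.mp heq).resolve_right h2
          exact this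
      · intro n _ hn
        rcases lt_or_gt_of_ne (fun h : (n : ℕ) = (m : ℕ) => hn (Fin.ext h)) with hlt | hgt
        · have : c n = 0 := ih (n : ℕ) (by omega) n rfl
          rw [this, zero_mul]
        · have hz : oscFam k t n ⟨(m : ℕ), hp⟩ = 0 := by
            have hnlt := n.isLt
            have hmlt := m.isLt
            simp only [oscFam, oscV, oscD1, oscD2, Fin.val_mk]
            split_ifs <;> simp only [oscV, oscD1, oscD2, Fin.val_mk] <;> split_ifs <;> first | rfl | omega
          rw [hz, mul_zero]
      · intro h
        exact absurd (Finset.mem_univ m) h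
  refine ⟨hli, ?_⟩
  rw [finrank_span_eq_card hli]
  simp
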